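/- arXiv:2105.00424 — 4 statements merged into one kernel-verified Lean document; each statement's English description precedes it below -/
import Mathlib

section
/- For Lagrangian gas dynamics with straight-segment paths in (τ,u,p), the nonconservative jump conditions σ[τ] = −[u], σ[u] = [p], σ[e] = ((p_l+p_r)/2)(u_r−u_l) are equivalent to the Rankine–Hugoniot conditions of the conservative form: σ[τ] = −[u], σ[u] = [p], σ[E] = [pu], where E = e + u²/2 and e = pτ/(γ−1). -/
/-- For Lagrangian gas dynamics with straight-segment paths in (τ,u,p), under
the jump conditions σ[τ]=−[u] and σ[u]=[p], the internal-energy jump condition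
σ[e] = ((p_l+p_r)/2)[u] is equivalent to the conservative total-energy jump
condition σ[E] = [pu]. -/
theorem lagrangian_jump_equivalence (γ τl ul pl τr ur pr σ : ℝ)
    (hγ : γ > 1) (hτl : τl > 0) (hτr : τr > 0)
    (hmass : σ * (τr - τl) = -(ur - ul))
    (hmom : σ * (ur - ul) = pr - pl) :
    let el := pl * τl / (γ - 1)
    let er := pr * τr / (γ - 1)
    let El := el + ul ^ 2 / 2
    let Er := er + ur ^ 2 / 2
    (σ * (er - el) = (pl + pr) / 2 * (ur - ul) ↔
      σ * (Er - El) = pr * ur - pl * ul) := by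
  intro el er El Er
  show _ ↔ σ * (er + ur ^ 2 / 2 - (el + ul ^ 2 / 2)) = pr * ur - pl * ul
  constructor <;> intro h
  · linear_combination h + ((ur + ul) / 2) * hmom
  · linear_combination h - ((ur + ul) / 2) * hmom
end

section
/- Both characteristic fields of the modified shallow water system are genuinely nonlinear on {h>0, u>0, h≠(16q)^{1/3} boundary excluded}: ∇λᵢ(h,q)·Rᵢ(h,q) ≠ 0 for i = 1,2, where λ_{1,2} = q/h ∓ h√(q/h) and R_{1,2} = (1, λ_{1,2})ᵀ, provided 0 < h < (16q)^{1/3}. -/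
lemma sw_key (h q l : ℝ) (hh : 0 < h) (hq : 0 < q) (c : ℝ) :
    fderiv ℝ (fun p : ℝ × ℝ => p.2 / p.1 + c * (p.1 * Real.sqrt (p.2 / p.1))) (h, q)
        (1, l) = (l * h - q) / h ^ 2
          + c * (Real.sqrt (q / h) + h * (1 / (2 * Real.sqrt (q / h)) * ((l * h - q) / h ^ 2))) := by
  have hu : 0 < q / h := div_pos hq hh
  have hdiv : DifferentiableAt ℝ (fun p : ℝ × ℝ => p.2 / p.1) (h, q) := by
    simp only [div_eq_mul_inv]
    exact differentiableAt_snd.mul (differentiableAt_fst.inv hh.ne')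
  have hf : DifferentiableAt ℝ
      (fun p : ℝ × ℝ => p.2 / p.1 + c * (p.1 * Real.sqrt (p.2 / p.1))) (h, q) := by
    refine hdiv.add (((differentiableAt_const c).mul (differentiableAt_fst.mul ?_)))
    exact hdiv.sqrt hu.ne'
  have hF := hf.hasFDerivAt
  -- the curve
  have hg : HasDerivAt (fun t : ℝ => ((h + t, q + l * t) : ℝ × ℝ)) (1, l) 0 := by
    apply HasDerivAt.prodMk
    · simpa using (hasDerivAt_id (0:ℝ)).const_add h
    · simpa using ((hasDerivAt_id (0:ℝ)).const_mul l).const_add q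
  have hF' : HasFDerivAt (fun p : ℝ × ℝ => p.2 / p.1 + c * (p.1 * Real.sqrt (p.2 / p.1)))
      (fderiv ℝ (fun p : ℝ × ℝ => p.2 / p.1 + c * (p.1 * Real.sqrt (p.2 / p.1))) (h, q))
      (h + 0, q + l * 0) := by norm_num; exact hF
  have hcomp := hF'.comp_hasDerivAt 0 hg
  -- explicit 1D derivative
  have hd : HasDerivAt (fun t : ℝ => h + t) 1 0 := by
    simpa using (hasDerivAt_id (0:ℝ)).const_add h
  have hn : HasDerivAt (fun t : ℝ => q + l * t) l 0 := by
    simpa using ((hasDerivAt_id (0:ℝ)).const_mul l).const_add q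
  have hd0 : h + (0:ℝ) ≠ 0 := by simpa using hh.ne'
  have hr : HasDerivAt (fun t : ℝ => (q + l * t) / (h + t))
      ((l * (h + 0) - (q + l * 0) * 1) / (h + 0) ^ 2) 0 := by simpa [Pi.div_def] using hn.div hd hd0
  have hr0 : (q + l * 0) / (h + 0) = q / h := by ring_nf
  have hs : HasDerivAt (fun t : ℝ => Real.sqrt ((q + l * t) / (h + t)))
      (1 / (2 * Real.sqrt (q / h)) * ((l * (h + 0) - (q + l * 0) * 1) / (h + 0) ^ 2)) 0 := by
    have := (Real.hasDerivAt_sqrt (x := (q + l * 0) / (h + 0)) (by rw [hr0]; exact hu.ne')).comp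
      (0:ℝ) hr
    simpa [hr0, Function.comp_def] using this
  have hm : HasDerivAt (fun t : ℝ => (h + t) * Real.sqrt ((q + l * t) / (h + t)))
      (1 * Real.sqrt ((q + l * 0) / (h + 0)) + (h + 0) *
        (1 / (2 * Real.sqrt (q / h)) * ((l * (h + 0) - (q + l * 0) * 1) / (h + 0) ^ 2))) 0 :=
    hd.mul hs
  have hphi : HasDerivAt (fun t : ℝ =>
      (q + l * t) / (h + t) + c * ((h + t) * Real.sqrt ((q + l * t) / (h + t))))
      ((l * (h + 0) - (q + l * 0) * 1) / (h + 0) ^ 2 + c *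
        (1 * Real.sqrt ((q + l * 0) / (h + 0)) + (h + 0) *
          (1 / (2 * Real.sqrt (q / h)) * ((l * (h + 0) - (q + l * 0) * 1) / (h + 0) ^ 2)))) 0 :=
    hr.add (hm.const_mul c)
  simp only [Function.comp_def] at hcomp
  have := hcomp.unique hphi
  rw [this, hr0]
  ring_nf



/-- Both characteristic fields of the modified shallow water system are
genuinely nonlinear on 0 < h < (16q)^(1/3). -/
theorem modified_sw_genuinely_nonlinear (h q : ℝ) (hh : 0 < h) (hq : 0 < q)
    (hbd : h < (16 * q) ^ ((1:ℝ)/3)) :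
    let u := q / h
    let l₁ := u - h * Real.sqrt u
    let l₂ := u + h * Real.sqrt u
    fderiv ℝ (fun p : ℝ × ℝ => p.2 / p.1 - p.1 * Real.sqrt (p.2 / p.1)) (h, q)
        (1, l₁) ≠ 0 ∧
    fderiv ℝ (fun p : ℝ × ℝ => p.2 / p.1 + p.1 * Real.sqrt (p.2 / p.1)) (h, q)
        (1, l₂) ≠ 0 := by
  intro u l₁ l₂
  have hu : 0 < u := div_pos hq hh
  set su := Real.sqrt u with hsu
  have hsup : 0 < su := Real.sqrt_pos.mpr hu
  have hsu2 : su ^ 2 = u := Real.sq_sqrt hu.le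
  -- cube the bound
  have h16 : (0:ℝ) ≤ 16 * q := by positivity
  have hcube : h ^ 3 < 16 * q := by
    have e : ((16 * q) ^ ((1:ℝ)/3)) ^ (3:ℕ) = 16 * q := by
      rw [← Real.rpow_natCast ((16 * q) ^ ((1:ℝ)/3)) 3, ← Real.rpow_mul h16]
      norm_num
    calc h ^ 3 < ((16 * q) ^ ((1:ℝ)/3)) ^ 3 := by
          exact pow_lt_pow_left₀ hbd hh.le (by norm_num)
      _ = 16 * q := e
  have hlt : h < 4 * su := by
    have h2 : h ^ 2 < (4 * su) ^ 2 := by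
      have : h ^ 2 * h < 16 * u * h := by
        have : 16 * u * h = 16 * q := by field_simp [u]; exact div_mul_cancel₀ q hh.ne'
        nlinarith [hcube]
      nlinarith [hsu2]
    exact lt_of_pow_lt_pow_left₀ 2 (by positivity) h2
  constructor
  · have efun : (fun p : ℝ × ℝ => p.2 / p.1 - p.1 * Real.sqrt (p.2 / p.1))
        = (fun p : ℝ × ℝ => p.2 / p.1 + (-1) * (p.1 * Real.sqrt (p.2 / p.1))) := by
      funext p; ring
    rw [efun, sw_key h q l₁ hh hq (-1)]
    have huh : u * h = q := div_mul_cancel₀ q hh.ne'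
    have e1 : (l₁ * h - q) / h ^ 2 = -su := by
      have : l₁ * h - q = -(h ^ 2) * su := by
        simp only [l₁, ← hsu, ← huh]; ring
      rw [this]; field_simp
    rw [e1]
    have : -su + -1 * (Real.sqrt (q / h) + h * (1 / (2 * Real.sqrt (q / h)) * -su))
        = -2 * su + h / 2 := by
      rw [show Real.sqrt (q / h) = su from rfl]
      field_simp
      ring
    rw [this]
    intro H
    nlinarith
  · have efun : (fun p : ℝ × ℝ => p.2 / p.1 + p.1 * Real.sqrt (p.2 / p.1))
        = (fun p : ℝ × ℝ => p.2 / p.1 + (1:ℝ) * (p.1 * Real.sqrt (p.2 / p.1))) := by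
      funext p; ring
    rw [efun, sw_key h q l₂ hh hq 1]
    have huh : u * h = q := div_mul_cancel₀ q hh.ne'
    have e1 : (l₂ * h - q) / h ^ 2 = su := by
      have : l₂ * h - q = h ^ 2 * su := by
        simp only [l₂, ← hsu, ← huh]; ring
      rw [this]; field_simp
    rw [e1]
    have : su + 1 * (Real.sqrt (q / h) + h * (1 / (2 * Real.sqrt (q / h)) * su))
        = 2 * su + h / 2 := by
      rw [show Real.sqrt (q / h) = su from rfl]
      field_simp
      ring
    rw [this]
    positivity
end

section
/- For a scalar conservation law discretized on a uniform grid, if the initial data is a single admissible discontinuity u_l/u_r located at x_{j*−1/2} + dΔx with 0<d<1 traveling at speed σ, and one time step of the in-cell discontinuous reconstruction scheme is performed with Δt satisfying |σ|Δt ≤ min(d, 1−d)Δx, then the updated cell averages equal the exact cell averages of the translated discontinuity: u_j¹ = u_j⁰ for j ≠ j*, and u_{j*}¹ = (d + σΔt/Δx) u_l + (1 − d − σΔt/Δx) u_r. -/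
open intervalIntegral

open MeasureTheory

lemma ae_ne_point (c : ℝ) : ∀ᵐ x : ℝ, x ≠ c := by
  rw [MeasureTheory.ae_iff]
  simp only [not_not]
  simpa using Real.volume_singleton (a := c)

lemma step_integrable (ul ur c a b : ℝ) :
    IntervalIntegrable (fun x => if x < c then ul else ur) volume a b := by
  have h : (fun x : ℝ => if x < c then ul else ur)
      = fun x => Set.indicator (Set.Iio c) (fun _ => ul - ur) x + ur := by
    funext x
    by_cases hx : x < c <;> simp [Set.indicator, hx]
  rw [h]
  apply IntervalIntegrable.add _ intervalIntegrable_const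
  rw [intervalIntegrable_iff]
  exact (integrableOn_const measure_Ioc_lt_top.ne).indicator measurableSet_Iio

lemma step_int_mid (ul ur c a b : ℝ) (hac : a ≤ c) (hcb : c ≤ b) :
    (∫ x in a..b, (if x < c then ul else ur)) = ul * (c - a) + ur * (b - c) := by
  have hab : a ≤ b := hac.trans hcb
  have h1 : (∫ x in a..c, (if x < c then ul else ur)) = ul * (c - a) := by
    have := intervalIntegral.integral_congr_ae (μ := volume) (a := a) (b := c)
      (f := fun x => if x < c then ul else ur) (g := fun _ => ul) ?_
    · rw [this, intervalIntegral.integral_const, smul_eq_mul, mul_comm]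
    · filter_upwards [ae_ne_point c] with x hx hmem
      rw [Set.uIoc_of_le hac] at hmem
      have : x < c := lt_of_le_of_ne hmem.2 hx
      simp [this]
  have h2 : (∫ x in c..b, (if x < c then ul else ur)) = ur * (b - c) := by
    have heq : Set.EqOn (fun x : ℝ => if x < c then ul else ur) (fun _ => ur)
        (Set.uIcc c b) := by
      intro x hx
      rw [Set.uIcc_of_le hcb] at hx
      have : ¬ x < c := not_lt.2 hx.1
      simp [this]
    rw [intervalIntegral.integral_congr heq, intervalIntegral.integral_const,
      smul_eq_mul, mul_comm]
  rw [← intervalIntegral.integral_add_adjacent_intervals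
      (step_integrable ul ur c a c) (step_integrable ul ur c c b), h1, h2]

lemma step_int_left (ul ur c a b : ℝ) (hab : a ≤ b) (hbc : b ≤ c) :
    (∫ x in a..b, (if x < c then ul else ur)) = ul * (b - a) := by
  have := intervalIntegral.integral_congr_ae (μ := volume) (a := a) (b := b)
    (f := fun x => if x < c then ul else ur) (g := fun _ => ul) ?_
  · rw [this, intervalIntegral.integral_const, smul_eq_mul, mul_comm]
  · filter_upwards [ae_ne_point c] with x hx hmem
    rw [Set.uIoc_of_le hab] at hmem
    have : x < c := lt_of_le_of_ne (hmem.2.trans hbc) hx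
    simp [this]

lemma step_int_right (ul ur c a b : ℝ) (hab : a ≤ b) (hca : c ≤ a) :
    (∫ x in a..b, (if x < c then ul else ur)) = ur * (b - a) := by
  have heq : Set.EqOn (fun x : ℝ => if x < c then ul else ur) (fun _ => ur)
      (Set.uIcc a b) := by
    intro x hx
    rw [Set.uIcc_of_le hab] at hx
    have : ¬ x < c := not_lt.2 (hca.trans hx.1)
    simp [this]
  rw [intervalIntegral.integral_congr heq, intervalIntegral.integral_const,
    smul_eq_mul, mul_comm]

/-- One step of the in-cell discontinuous reconstruction scheme applied to a
single admissible discontinuity reproduces the exact cell averages of the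
translated discontinuity. -/
theorem in_cell_reconstruction_exact
    (ul ur σ d Δx Δt : ℝ) (jstar : ℤ)
    (hΔx : 0 < Δx) (hd0 : 0 < d) (hd1 : d < 1) (hΔt : 0 ≤ Δt)
    (hcfl : |σ| * Δt ≤ min d (1 - d) * Δx) :
    let uex : ℝ → ℝ → ℝ := fun x t =>
      if x < (jstar : ℝ) * Δx + d * Δx + σ * t then ul else ur
    let u0 : ℤ → ℝ := fun j =>
      (1 / Δx) * ∫ x in (j : ℝ) * Δx..((j : ℝ) + 1) * Δx, uex x 0
    let u1 : ℤ → ℝ := fun j =>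
      if j = jstar then u0 jstar - Δt / Δx * (σ * (ur - ul)) else u0 j
    ∀ j : ℤ, u1 j = (1 / Δx) * ∫ x in (j : ℝ) * Δx..((j : ℝ) + 1) * Δx, uex x Δt := by
  intro uex u0 u1 j
  have habs : |σ * Δt| ≤ min d (1 - d) * Δx := by
    rw [abs_mul, abs_of_nonneg hΔt]; exact hcfl
  have hm1 : min d (1 - d) * Δx ≤ d * Δx :=
    mul_le_mul_of_nonneg_right (min_le_left _ _) hΔx.le
  have hm2 : min d (1 - d) * Δx ≤ (1 - d) * Δx :=
    mul_le_mul_of_nonneg_right (min_le_right _ _) hΔx.le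
  have h1 : -(d * Δx) ≤ σ * Δt := by
    have := neg_abs_le (σ * Δt); linarith
  have h2 : σ * Δt ≤ (1 - d) * Δx := by
    have := le_abs_self (σ * Δt); linarith
  simp only [u1, u0, uex]
  by_cases hj : j = jstar
  · subst hj
    rw [if_pos rfl]
    have ha0 : (j : ℝ) * Δx ≤ (j : ℝ) * Δx + d * Δx + σ * 0 := by nlinarith
    have hb0 : (j : ℝ) * Δx + d * Δx + σ * 0 ≤ ((j : ℝ) + 1) * Δx := by nlinarith
    have haT : (j : ℝ) * Δx ≤ (j : ℝ) * Δx + d * Δx + σ * Δt := by nlinarith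
    have hbT : (j : ℝ) * Δx + d * Δx + σ * Δt ≤ ((j : ℝ) + 1) * Δx := by nlinarith
    rw [step_int_mid ul ur _ _ _ ha0 hb0, step_int_mid ul ur _ _ _ haT hbT]
    field_simp
    ring
  · rw [if_neg hj]
    have hab : (j : ℝ) * Δx ≤ ((j : ℝ) + 1) * Δx := by nlinarith
    rcases lt_or_gt_of_ne hj with h | h
    · have hcast : (j : ℝ) + 1 ≤ (jstar : ℝ) := by
        exact_mod_cast Int.add_one_le_iff.mpr h
      have hle : ((j : ℝ) + 1) * Δx ≤ (jstar : ℝ) * Δx :=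
        mul_le_mul_of_nonneg_right hcast hΔx.le
      have hb0 : ((j : ℝ) + 1) * Δx ≤ (jstar : ℝ) * Δx + d * Δx + σ * 0 := by nlinarith
      have hbT : ((j : ℝ) + 1) * Δx ≤ (jstar : ℝ) * Δx + d * Δx + σ * Δt := by nlinarith
      rw [step_int_left ul ur _ _ _ hab hb0, step_int_left ul ur _ _ _ hab hbT]
    · have hcast : (jstar : ℝ) + 1 ≤ (j : ℝ) := by
        exact_mod_cast Int.add_one_le_iff.mpr h
      have hle : ((jstar : ℝ) + 1) * Δx ≤ (j : ℝ) * Δx :=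
        mul_le_mul_of_nonneg_right hcast hΔx.le
      have hc0 : (jstar : ℝ) * Δx + d * Δx + σ * 0 ≤ (j : ℝ) * Δx := by nlinarith
      have hcT : (jstar : ℝ) * Δx + d * Δx + σ * Δt ≤ (j : ℝ) * Δx := by nlinarith
      rw [step_int_right ul ur _ _ _ hab hc0, step_int_right ul ur _ _ _ hab hcT]
end

section
/- For the Lagrangian gas dynamics Roe matrix A(ū) with ū = ((τ_l+τ_r)/2, (u_l+u_r)/2, p̄τ̄/(γ−1)) where p̄ = (p_l+p_r)/2, the jump relation A(ū)·(Δτ, Δu, Δe)ᵀ equals the straight-segment path integral (−Δu, Δp, ((p_l+p_r)/2)Δu)ᵀ, where Δe = e_r − e_l with e_i = p_iτ_i/(γ−1). -/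
/-! Writing `Δx = x_r - x_l` and `x̄ = (x_l + x_r) / 2`, the arithmetic means obey the exact
discrete product rule `Δ(pτ) = p̄ Δτ + τ̄ Δp`. Since `(γ - 1) e = p τ`, this makes the momentum
row of the Roe matrix, which at `ē = p̄ τ̄ / (γ - 1)` reads `(-p̄ Δτ + (γ - 1) Δe) / τ̄`,
collapse to `Δp`; the last row reduces to `(γ - 1) ē / τ̄ = p̄`. -/

theorem mul_sub_mul_eq_mean_mul_sub_add_mean_mul_sub {K : Type*} [Field K] [NeZero (2 : K)]
    (pl pr τl τr : K) :
    pr * τr - pl * τl = (pl + pr) / 2 * (τr - τl) + (τl + τr) / 2 * (pr - pl) := by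
  field_simp
  ring

section RoeRows

variable {K : Type*} [Field K] {g τb pb eb : K}

theorem roe_momentum_row (hτb : τb ≠ 0) (heb : g * eb = pb * τb) {Δτ Δe Δp : K}
    (hΔe : g * Δe = pb * Δτ + τb * Δp) :
    -(g * eb) / τb ^ 2 * Δτ + g / τb * Δe = Δp := by
  rw [heb, div_mul_eq_mul_div g, hΔe]
  field_simp
  ring

theorem roe_energy_row (hτb : τb ≠ 0) (heb : g * eb = pb * τb) : g * eb / τb = pb := by
  rw [heb, mul_div_cancel_right₀ pb hτb]

end RoeRows

/-- The Roe matrix of Lagrangian gas dynamics, evaluated at the arithmetic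
averages, maps the jump (Δτ, Δu, Δe) to (−Δu, Δp, p̄ Δu). -/
theorem lagrangian_roe_jump (γ τl ul pl τr ur pr : ℝ)
    (hγ : γ > 1) (hτl : τl > 0) (hτr : τr > 0) :
    let τb := (τl + τr) / 2
    let pb := (pl + pr) / 2
    let eb := pb * τb / (γ - 1)
    let el := pl * τl / (γ - 1)
    let er := pr * τr / (γ - 1)
    let A : Matrix (Fin 3) (Fin 3) ℝ :=
      !![0, -1, 0; -((γ - 1) * eb) / τb ^ 2, 0, (γ - 1) / τb; 0, (γ - 1) * eb / τb, 0]
    A.mulVec ![τr - τl, ur - ul, er - el]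
      = ![-(ur - ul), pr - pl, pb * (ur - ul)] := by
  intro τb pb eb el er A
  have hγ1 : γ - 1 ≠ 0 := by linarith
  have hτb : τb ≠ 0 := by positivity
  have heb : (γ - 1) * eb = pb * τb := mul_div_cancel₀ _ hγ1
  have hΔe : (γ - 1) * (er - el) = pb * (τr - τl) + τb * (pr - pl) := by
    rw [mul_sub, mul_div_cancel₀ _ hγ1, mul_div_cancel₀ _ hγ1]
    exact mul_sub_mul_eq_mean_mul_sub_add_mean_mul_sub pl pr τl τr
  ext i
  fin_cases i
  · simp [A, Matrix.mulVec]
  · simpa [A, Matrix.mulVec, Fin.sum_univ_three] using roe_momentum_row hτb heb hΔe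
  · simp [A, Matrix.mulVec, roe_energy_row hτb heb]
end
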